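/- Let G be a finite simple quasi-regularizable graph on n vertices, i.e., a graph such that |S| ≤ |N(S)| holds for every independent set S ⊆ V(G), where N(S) = ∪_{v ∈ S} {u : uv ∈ E(G)}. Then avd(G) ≤ 2n/3. -/

import Mathlib

open Finset

/-- `S` is a dominating set of `G`: every vertex is in `S` or adjacent to a vertex of `S`. -/
def SimpleGraph.IsDomSet {V : Type*} (G : SimpleGraph V) (S : Finset V) : Prop :=
  ∀ v : V, v ∈ S ∨ ∃ u ∈ S, G.Adj u v

/-- The family of all dominating sets of `G`. -/
noncomputable def SimpleGraph.domSets {V : Type*} [Fintype V] (G : SimpleGraph V) :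
    Finset (Finset V) :=
  @Finset.filter _ (fun S => G.IsDomSet S) (Classical.decPred _) Finset.univ

/-- The average order (cardinality) of a dominating set of `G`. -/
noncomputable def SimpleGraph.avd {V : Type*} [Fintype V] (G : SimpleGraph V) : ℝ :=
  (∑ S ∈ G.domSets, (S.card : ℝ)) / (G.domSets).card

/-!
Hall's condition for independent sets implies it for all vertex sets, so there is an injection `f`
with `v ~ f v` for every vertex `v`. Fix a dominating set `S`. A vertex `v ∈ S` whose removal
destroys domination is witnessed by a vertex `w ∉ S`: either `w = f v`, or (if `f v ∈ S`) a
private neighbour of `v`, and no `w` witnesses two vertices. Every other `v ∈ S` gives the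
dominating set `S \ {v}` avoiding `v`. Hence `∑ |S| ≤ 2 ∑ |V \ S|` over all dominating sets `S`.
-/

namespace SimpleGraph

variable {V : Type*} {G : SimpleGraph V}

lemma exists_private_of_not_isDomSet_erase [DecidableEq V] {S : Finset V} {v : V}
    (hS : G.IsDomSet S) (hv : ∃ u ∈ S, u ≠ v ∧ G.Adj u v) (h : ¬ G.IsDomSet (S.erase v)) :
    ∃ w ∉ S, G.Adj v w ∧ ∀ u ∈ S, G.Adj u w → u = v := by
  simp only [IsDomSet, not_forall, not_or, not_exists, not_and, mem_erase] at h
  obtain ⟨w, hw_erase, hw⟩ := h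
  have hwv : w ≠ v := by
    rintro rfl
    obtain ⟨u, huS, huw, hadj⟩ := hv
    exact hw u ⟨huw, huS⟩ hadj
  have hprivate : ∀ u ∈ S, G.Adj u w → u = v := fun u huS hadj =>
    by_contra fun huv => hw u ⟨huv, huS⟩ hadj
  have hwS : w ∉ S := fun h => hw_erase hwv h
  obtain ⟨u, huS, hadj⟩ := (hS w).resolve_left hwS
  exact ⟨w, hwS, hprivate u huS hadj ▸ hadj, hprivate⟩

variable [Fintype V]

lemma mem_domSets {S : Finset V} : S ∈ G.domSets ↔ G.IsDomSet S := by
  simp [domSets]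

lemma isDomSet_univ : G.IsDomSet (univ : Finset V) := fun v => Or.inl (mem_univ v)

variable [DecidableEq V]

section Adjacency

variable [DecidableRel G.Adj]

/-- The vertices of `A` outside `N(A)` form an independent set whose neighbourhood avoids `A`. -/
lemma card_le_card_biUnion_neighborFinset
    (hqr : ∀ S : Finset V, (∀ u ∈ S, ∀ v ∈ S, ¬ G.Adj u v) →
      #S ≤ #(S.biUnion (fun v => G.neighborFinset v))) (A : Finset V) :
    #A ≤ #(A.biUnion (fun v => G.neighborFinset v)) := by
  set N := A.biUnion (fun v => G.neighborFinset v)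
  have hN : ∀ {u v}, u ∈ A → G.Adj u v → v ∈ N := fun hu huv =>
    mem_biUnion.mpr ⟨_, hu, (G.mem_neighborFinset _ _).mpr huv⟩
  have hIndep : ∀ u ∈ A \ N, ∀ v ∈ A \ N, ¬ G.Adj u v := fun u hu v hv huv =>
    (mem_sdiff.mp hu).2 (hN (mem_sdiff.mp hv).1 huv.symm)
  have hNI : (A \ N).biUnion (fun v => G.neighborFinset v) ⊆ N \ A := by
    intro w hw
    obtain ⟨u, hu, huw⟩ := mem_biUnion.mp hw
    rw [mem_sdiff] at hu
    rw [mem_neighborFinset] at huw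
    exact mem_sdiff.mpr ⟨hN hu.1 huw, fun hwA => hu.2 (hN hwA huw.symm)⟩
  exact card_sdiff_le_card_sdiff_iff.mp ((hqr _ hIndep).trans (card_le_card hNI))

lemma exists_injective_adj
    (hqr : ∀ S : Finset V, (∀ u ∈ S, ∀ v ∈ S, ¬ G.Adj u v) →
      #S ≤ #(S.biUnion (fun v => G.neighborFinset v))) :
    ∃ f : V → V, Function.Injective f ∧ ∀ v, G.Adj v (f v) := by
  obtain ⟨f, hf, hadj⟩ := (all_card_le_biUnion_card_iff_exists_injective
    (fun v => G.neighborFinset v)).mp (card_le_card_biUnion_neighborFinset hqr)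
  exact ⟨f, hf, fun v => (G.mem_neighborFinset _ _).mp (hadj v)⟩

instance (S : Finset V) : Decidable (G.IsDomSet S) := by
  unfold IsDomSet; infer_instance

lemma card_filter_not_isDomSet_erase_le {f : V → V} (hf : Function.Injective f)
    (hadj : ∀ v, G.Adj v (f v)) {S : Finset V} (hS : G.IsDomSet S) :
    #{v ∈ S | ¬ G.IsDomSet (S.erase v)} ≤ #Sᶜ := by
  refine card_le_card_of_forall_subsingleton
    (fun v w => G.Adj v w ∧ (w = f v ∨ ∀ u ∈ S, G.Adj u w → u = v)) ?_ ?_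
  · intro v hv
    obtain ⟨-, hv⟩ := mem_filter.mp hv
    by_cases hfv : f v ∈ S
    · obtain ⟨w, hwS, hvw, hw⟩ := exists_private_of_not_isDomSet_erase hS
        ⟨f v, hfv, (hadj v).ne', (hadj v).symm⟩ hv
      exact ⟨w, mem_compl.mpr hwS, hvw, Or.inr hw⟩
    · exact ⟨f v, mem_compl.mpr hfv, hadj v, Or.inl rfl⟩
  · rintro w - v₁ ⟨hv₁, hadj₁, hw₁⟩ v₂ ⟨hv₂, hadj₂, hw₂⟩
    rw [mem_filter] at hv₁ hv₂
    rcases hw₁ with rfl | hw₁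
    · rcases hw₂ with hw₂ | hw₂
      · exact hf hw₂
      · exact hw₂ v₁ hv₁.1 hadj₁
    · exact (hw₁ v₂ hv₂.1 hadj₂).symm

lemma sum_card_filter_isDomSet_erase_le :
    ∑ S ∈ G.domSets, #{v ∈ S | G.IsDomSet (S.erase v)} ≤ ∑ S ∈ G.domSets, #Sᶜ := by
  simp only [← card_sigma]
  refine card_le_card_of_injOn (fun p => ⟨p.1.erase p.2, p.2⟩) ?_ ?_
  · rintro ⟨S, v⟩ h
    simp only [mem_coe, mem_sigma, mem_filter, mem_domSets] at h
    exact mem_sigma.mpr ⟨mem_domSets.mpr h.2.2, mem_compl.mpr (notMem_erase v S)⟩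
  · rintro ⟨S, v⟩ h ⟨S', v'⟩ h' heq
    simp only [coe_sigma, Set.mem_sigma_iff, mem_coe, mem_filter] at h h'
    simp only [Sigma.mk.injEq] at heq
    obtain ⟨hSS', rfl⟩ := heq
    rw [← insert_erase h.2.1, ← insert_erase h'.2.1, hSS']

lemma sum_card_le_two_mul_sum_card_compl {f : V → V} (hf : Function.Injective f)
    (hadj : ∀ v, G.Adj v (f v)) :
    ∑ S ∈ G.domSets, #S ≤ 2 * ∑ S ∈ G.domSets, #Sᶜ := calc
  ∑ S ∈ G.domSets, #S = ∑ S ∈ G.domSets, #{v ∈ S | ¬ G.IsDomSet (S.erase v)} +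
      ∑ S ∈ G.domSets, #{v ∈ S | G.IsDomSet (S.erase v)} := by
    rw [← sum_add_distrib]
    exact sum_congr rfl fun S _ => by rw [add_comm, card_filter_add_card_filter_not]
  _ ≤ ∑ S ∈ G.domSets, #Sᶜ + ∑ S ∈ G.domSets, #Sᶜ := by
    exact add_le_add (sum_le_sum fun S hS =>
      card_filter_not_isDomSet_erase_le hf hadj (mem_domSets.mp hS))
      sum_card_filter_isDomSet_erase_le
  _ = 2 * ∑ S ∈ G.domSets, #Sᶜ := (two_mul _).symm

end Adjacency

lemma avd_le_of_sum_card_le_two_mul_sum_card_compl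
    (h : ∑ S ∈ G.domSets, #S ≤ 2 * ∑ S ∈ G.domSets, #Sᶜ) :
    G.avd ≤ 2 * (Fintype.card V : ℝ) / 3 := by
  have hcard : ∑ S ∈ G.domSets, #S + ∑ S ∈ G.domSets, #Sᶜ = Fintype.card V * #G.domSets := by
    rw [← sum_add_distrib, sum_congr rfl fun S _ => card_add_card_compl S, sum_const,
      smul_eq_mul, mul_comm]
  have hpos : (0 : ℝ) < #G.domSets := by
    exact_mod_cast card_pos.mpr ⟨univ, mem_domSets.mpr isDomSet_univ⟩
  have h3 : 3 * ∑ S ∈ G.domSets, (#S : ℝ) ≤ 2 * (Fintype.card V * #G.domSets) := by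
    have : 3 * ∑ S ∈ G.domSets, #S ≤ 2 * (Fintype.card V * #G.domSets) := by omega
    exact_mod_cast this
  rw [avd, div_le_div_iff₀ hpos three_pos]
  linarith

end SimpleGraph

/-- If `G` is quasi-regularizable (i.e. `|S| ≤ |N(S)|` for every independent set `S`,
by Berge's characterization), then `avd(G) ≤ 2n/3`. -/
theorem avd_le_of_quasiRegularizable {V : Type*} [Fintype V] [DecidableEq V]
    (G : SimpleGraph V) [DecidableRel G.Adj] (n : ℕ) (hn : n = Fintype.card V)
    (hqr : ∀ S : Finset V, (∀ u ∈ S, ∀ v ∈ S, ¬ G.Adj u v) →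
      S.card ≤ (S.biUnion (fun v => G.neighborFinset v)).card) :
    G.avd ≤ 2 * (n : ℝ) / 3 := by
  obtain ⟨f, hf, hadj⟩ := G.exists_injective_adj hqr
  rw [hn]
  exact G.avd_le_of_sum_card_le_two_mul_sum_card_compl
    (G.sum_card_le_two_mul_sum_card_compl hf hadj)
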